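/- arXiv:2502.06515 — 7 statements merged into one kernel-verified Lean document; each statement's English description precedes it below -/
import Mathlib

section
/- Consider the same three-bank network (edges (u,v) and (v,w), both liability 4, external assets 2, 0, 3 for u, v, w). Among binary trades of edge (u,v) to w (beta = 1) with return rho <= 3, the maximal achievable post-trade assets of v subject to a'_w >= 5 is 3, achieved at rho = 3; hence the fractional trade with beta = 3/4 and rho = 3, which yields a'_v = 3.5, strictly outperforms every binary trade. -/
open Finset

/-- A financial network: liabilities `liab u v` on edge (u,v) (0 if absent) and
external assets `ext v`. -/
structure Network (V : Type) [Fintype V] where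
  liab : V → V → ℝ
  ext : V → ℝ

variable {V : Type} [Fintype V] [DecidableEq V]

/-- Total liabilities `L_v` of bank `v`. -/
def totalLiab [Fintype V] (N : Network V) (v : V) : ℝ := ∑ u, N.liab v u

/-- Total assets of `v` given recovery rates `r`. -/
def assets [Fintype V] (N : Network V) (r : V → ℝ) (v : V) : ℝ :=
  N.ext v + ∑ u, r u * N.liab u v

/-- The update map `r ↦ min(a_v(r)/L_v, 1)` (interpreted as 1 when `L_v = 0`). -/
noncomputable def updateMap [Fintype V] (N : Network V) (r : V → ℝ) (v : V) : ℝ :=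
  if totalLiab N v ≤ assets N r v then 1 else assets N r v / totalLiab N v

/-- The update map with default cost `δ`. -/
noncomputable def updateMapD [Fintype V] (N : Network V) (δ : ℝ) (r : V → ℝ) (v : V) : ℝ :=
  if totalLiab N v ≤ assets N r v then 1 else δ * assets N r v / totalLiab N v

/-- `r` lies in the box `[0,1]^V`. -/
def inBox (r : V → ℝ) : Prop := ∀ v, r v ∈ Set.Icc (0:ℝ) 1

/-- The clearing state: the componentwise greatest fixed point of the update map in `[0,1]^V`. -/
noncomputable def IsClearing [Fintype V] (N : Network V) (r : V → ℝ) : Prop :=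
  inBox r ∧ updateMap N r = r ∧ ∀ r', inBox r' → updateMap N r' = r' → r' ≤ r

/-- The clearing state with default cost `δ`. -/
noncomputable def IsClearingD [Fintype V] (N : Network V) (δ : ℝ) (r : V → ℝ) : Prop :=
  inBox r ∧ updateMapD N δ r = r ∧ ∀ r', inBox r' → updateMapD N δ r' = r' → r' ≤ r

/-- The three-bank example network: banks u = 0, v = 1, w = 2;
edges (u,v) and (v,w) with liability 4; external assets 2, 0, 3. -/
noncomputable def preNet : Network (Fin 3) :=
  ⟨![![0,4,0],![0,0,4],![0,0,0]], ![2,0,3]⟩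

/-- The network after the binary trade (β = 1) of edge (u,v) with return ρ:
edges (u,w) with liability 4 and (v,w) with liability 4;
external assets 2, ρ, 3 − ρ. -/
noncomputable def binNet (ρ : ℝ) : Network (Fin 3) :=
  ⟨![![0,0,4],![0,0,4],![0,0,0]], ![2,ρ,3-ρ]⟩

/-- The network after the fractional trade with β = 3/4 and ρ = 3. -/
noncomputable def fracNet : Network (Fin 3) :=
  ⟨![![0,1,3],![0,0,4],![0,0,0]], ![2,3,0]⟩

/-- Among binary trades of (u,v) to w with return ρ ≤ 3, the maximal post-trade assets of v
subject to a'_w ≥ 5 is 3, achieved at ρ = 3; the fractional trade (β = 3/4, ρ = 3) yields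
a'_v = 3.5 and hence strictly outperforms every binary trade. -/
theorem stmt_5 :
    (∀ ρ : ℝ, 0 ≤ ρ → ρ ≤ 3 →
      ∀ r : Fin 3 → ℝ, IsClearing (binNet ρ) r →
        (5 : ℝ) ≤ assets (binNet ρ) r 2 → assets (binNet ρ) r 1 ≤ 3) ∧
    (∀ r : Fin 3 → ℝ, IsClearing (binNet 3) r → assets (binNet 3) r 1 = 3) ∧
    (∀ r' : Fin 3 → ℝ, IsClearing fracNet r' → assets fracNet r' 1 = 3.5) := by
  refine ⟨?_, ?_, ?_⟩
  · intro ρ h0 h3 r _ _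
    simp [assets, binNet, Fin.sum_univ_three]
    linarith
  · intro r _
    simp [assets, binNet, Fin.sum_univ_three]
  · intro r' ⟨_, hfix, _⟩
    have h0 : r' 0 = 1/2 := by
      have := congrFun hfix 0
      simp [updateMap, assets, totalLiab, fracNet, Fin.sum_univ_three] at this
      norm_num at this
      linarith
    simp [assets, fracNet, Fin.sum_univ_three, h0, Matrix.vecHead, Matrix.vecTail]
    norm_num
end

section
/- In a financial network without default cost, no single claims trade of an edge (u,v) to a buyer w can be positive: it is impossible that both the post-trade assets of v and of w strictly exceed their pre-trade assets, i.e., it cannot hold that a'_v > a_v and a'_w > a_w simultaneously. -/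
open Finset

variable {V : Type} [Fintype V] [DecidableEq V]

/-- The post-trade network of a single claims trade of edge `(u,v)` to buyer `w` with
traded fraction `β` and return `ρ`: a `β`-fraction of the claim is redirected to `w`,
and `ρ` external assets move from `w` to `v`. -/
noncomputable def postTrade {n : ℕ} (N : Network (Fin n)) (u v w : Fin n) (β ρ : ℝ) :
    Network (Fin n) where
  liab a b :=
    if a = u ∧ b = v then (1 - β) * N.liab u v
    else if a = u ∧ b = w then N.liab u w + β * N.liab u v
    else N.liab a b
  ext b :=
    if b = v then N.ext v + ρ
    else if b = w then N.ext w - ρ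
    else N.ext b

/- ------------------------------------------------------------------ -/
/- Auxiliary lemmas                                                    -/
/- ------------------------------------------------------------------ -/

section Aux

variable {n : ℕ}

lemma aux_uval_mono {L A A' : ℝ} (hA : 0 ≤ A) (h : A ≤ A') :
    (if L ≤ A then (1:ℝ) else A / L) ≤ (if L ≤ A' then 1 else A' / L) := by
  split_ifs with h1 h2 h2
  · exact le_refl 1
  · exact absurd (h1.trans h) h2
  · have hL : 0 < L := lt_of_le_of_lt hA (not_le.mp h1)
    exact le_of_lt ((div_lt_one hL).mpr (not_le.mp h1))
  · have hL : 0 < L := lt_of_le_of_lt hA (not_le.mp h1)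
    gcongr

lemma aux_assets_nonneg (M : Network (Fin n)) (hl : ∀ a b, 0 ≤ M.liab a b)
    (he : ∀ b, 0 ≤ M.ext b) {t : Fin n → ℝ} (h0 : ∀ a, 0 ≤ t a) (b : Fin n) :
    0 ≤ assets M t b :=
  add_nonneg (he b) (Finset.sum_nonneg fun a _ => mul_nonneg (h0 a) (hl a b))

lemma aux_assets_mono (M : Network (Fin n)) (hl : ∀ a b, 0 ≤ M.liab a b)
    {s t : Fin n → ℝ} (hst : ∀ a, s a ≤ t a) (b : Fin n) :
    assets M s b ≤ assets M t b := by
  unfold assets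
  refine add_le_add le_rfl (Finset.sum_le_sum fun a _ => ?_)
  exact mul_le_mul_of_nonneg_right (hst a) (hl a b)

lemma aux_updateMap_mono (M : Network (Fin n)) (hl : ∀ a b, 0 ≤ M.liab a b)
    (he : ∀ b, 0 ≤ M.ext b) {s t : Fin n → ℝ} (h0 : ∀ a, 0 ≤ s a) (hst : ∀ a, s a ≤ t a) :
    ∀ b, updateMap M s b ≤ updateMap M t b := by
  intro b
  unfold updateMap
  exact aux_uval_mono (aux_assets_nonneg M hl he h0 b) (aux_assets_mono M hl hst b)

lemma aux_updateMap_inBox (M : Network (Fin n)) (hl : ∀ a b, 0 ≤ M.liab a b)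
    (he : ∀ b, 0 ≤ M.ext b) {t : Fin n → ℝ} (h0 : ∀ a, 0 ≤ t a) :
    inBox (updateMap M t) := by
  intro b
  have hA : 0 ≤ assets M t b := aux_assets_nonneg M hl he h0 b
  unfold updateMap
  split_ifs with h
  · exact ⟨zero_le_one, le_refl 1⟩
  · have hL : 0 < totalLiab M b := lt_of_le_of_lt hA (not_le.mp h)
    exact ⟨div_nonneg hA hL.le, le_of_lt ((div_lt_one hL).mpr (not_le.mp h))⟩

/-- Any prefixed point of the update map in the box lies below the clearing state. -/
lemma aux_prefix_le_clearing (M : Network (Fin n)) (hl : ∀ a b, 0 ≤ M.liab a b)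
    (he : ∀ b, 0 ≤ M.ext b) {rc s : Fin n → ℝ} (hrc : IsClearing M rc)
    (hs : inBox s) (hpre : ∀ b, s b ≤ updateMap M s b) : ∀ b, s b ≤ rc b := by
  classical
  set P : Set (Fin n → ℝ) := {t | inBox t ∧ ∀ b, t b ≤ updateMap M t b} with hP
  have hsP : s ∈ P := ⟨hs, hpre⟩
  set m : Fin n → ℝ := fun b => sSup ((fun t => t b) '' P) with hm
  have hne : ∀ b, ((fun t => t b) '' P).Nonempty := fun b => ⟨s b, ⟨s, hsP, rfl⟩⟩
  have hbdd : ∀ b, BddAbove ((fun t => t b) '' P) := by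
    intro b
    refine ⟨1, ?_⟩
    rintro x ⟨t, ht, rfl⟩
    exact (ht.1 b).2
  have hle : ∀ t ∈ P, ∀ b, t b ≤ m b := fun t ht b => le_csSup (hbdd b) ⟨t, ht, rfl⟩
  have hm0 : ∀ b, 0 ≤ m b := fun b => le_trans (hs b).1 (hle s hsP b)
  have hm1 : ∀ b, m b ≤ 1 := by
    intro b
    refine csSup_le (hne b) ?_
    rintro x ⟨t, ht, rfl⟩
    exact (ht.1 b).2
  have hmbox : inBox m := fun b => ⟨hm0 b, hm1 b⟩
  have hmpre : ∀ b, m b ≤ updateMap M m b := by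
    intro b
    refine csSup_le (hne b) ?_
    rintro x ⟨t, ht, rfl⟩
    exact le_trans (ht.2 b) (aux_updateMap_mono M hl he (fun a => (ht.1 a).1) (hle t ht) b)
  have hΦP : updateMap M m ∈ P :=
    ⟨aux_updateMap_inBox M hl he hm0, fun b => aux_updateMap_mono M hl he hm0 hmpre b⟩
  have hfix : updateMap M m = m :=
    funext fun b => le_antisymm (hle _ hΦP b) (hmpre b)
  intro b
  exact le_trans (hle s hsP b) (hrc.2.2 m hmbox hfix b)

/-- payments in a clearing state -/
lemma aux_clearing_payment (M : Network (Fin n)) (hl : ∀ a b, 0 ≤ M.liab a b)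
    (he : ∀ b, 0 ≤ M.ext b) {t : Fin n → ℝ} (ht : IsClearing M t) (b : Fin n) :
    t b * totalLiab M b = min (assets M t b) (totalLiab M b) := by
  have hA : 0 ≤ assets M t b := aux_assets_nonneg M hl he (fun a => (ht.1 a).1) b
  have hfix := congrFun ht.2.1 b
  unfold updateMap at hfix
  split_ifs at hfix with h
  · rw [← hfix, min_eq_right h, one_mul]
  · have hL : 0 < totalLiab M b := lt_of_le_of_lt hA (not_le.mp h)
    rw [← hfix, div_mul_cancel₀ _ hL.ne', min_eq_left (not_le.mp h).le]

lemma aux_sum_assets (M : Network (Fin n)) (t : Fin n → ℝ) :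
    ∑ b, assets M t b = (∑ b, M.ext b) + ∑ a, t a * totalLiab M a := by
  unfold assets totalLiab
  rw [Finset.sum_add_distrib]
  congr 1
  rw [Finset.sum_comm]
  exact Finset.sum_congr rfl fun a _ => (Finset.mul_sum _ _ _).symm

/-- existence of a nonnegative, nonzero stationary vector of a row-stochastic matrix -/
lemma aux_exists_stationary {m : Type} [Fintype m] [DecidableEq m] [Nonempty m]
    (A : Matrix m m ℝ) (hA : ∀ a b, 0 ≤ A a b) (hrow : ∀ a, ∑ b, A a b = 1) :
    ∃ z : m → ℝ, (∀ a, 0 ≤ z a) ∧ z ≠ 0 ∧ ∀ b, ∑ a, z a * A a b = z b := by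
  classical
  have hdet : (A - 1).det = 0 := by
    rw [← Matrix.exists_mulVec_eq_zero_iff]
    refine ⟨fun _ => 1, ?_, ?_⟩
    · intro h
      simpa using congrFun h (Classical.arbitrary m)
    · funext b
      simp only [Matrix.mulVec, dotProduct, Matrix.sub_apply, Matrix.one_apply, mul_one,
        Pi.zero_apply]
      rw [Finset.sum_sub_distrib, hrow]
      simp
  have hdetT : ((A - 1).transpose).det = 0 := by rw [Matrix.det_transpose]; exact hdet
  obtain ⟨x, hx0, hx⟩ := (Matrix.exists_mulVec_eq_zero_iff).mpr hdetT
  have hxe : ∀ b, ∑ a, x a * A a b = x b := by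
    intro b
    have h := congrFun hx b
    simp only [Matrix.mulVec, dotProduct, Matrix.transpose_apply, Matrix.sub_apply,
      Matrix.one_apply, Pi.zero_apply, sub_mul] at h
    rw [Finset.sum_sub_distrib] at h
    have h2 : ∑ a, (if a = b then (1:ℝ) else 0) * x a = x b := by
      simp
    rw [h2] at h
    have h4 : ∑ a, A a b * x a = x b := by linarith
    rw [← h4]
    exact Finset.sum_congr rfl fun a _ => mul_comm _ _
  refine ⟨fun a => |x a|, fun a => abs_nonneg _, ?_, ?_⟩
  · intro h
    apply hx0
    funext a
    have := congrFun h a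
    simpa [abs_eq_zero] using this
  · have hle : ∀ b, |x b| ≤ ∑ a, |x a| * A a b := by
      intro b
      rw [← hxe b]
      refine (Finset.abs_sum_le_sum_abs _ _).trans (le_of_eq ?_)
      exact Finset.sum_congr rfl fun a _ => by rw [abs_mul, abs_of_nonneg (hA a b)]
    have hsum : ∑ b, (∑ a, |x a| * A a b) = ∑ b, |x b| := by
      rw [Finset.sum_comm]
      refine Finset.sum_congr rfl fun a _ => ?_
      rw [← Finset.mul_sum, hrow, mul_one]
    have h0 : ∑ b, ((∑ a, |x a| * A a b) - |x b|) = 0 := by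
      rw [Finset.sum_sub_distrib, hsum, sub_self]
    intro b
    have := (Finset.sum_eq_zero_iff_of_nonneg
      (fun c _ => sub_nonneg.mpr (hle c))).mp h0 b (Finset.mem_univ b)
    linarith [this]


end Aux

/-- In a network without default cost no single claims trade is positive: it is impossible
that both the creditor `v` and the buyer `w` strictly improve their clearing assets. -/
theorem stmt_6 {n : ℕ} (N : Network (Fin n)) (u v w : Fin n)
    (huv : u ≠ v) (huw : u ≠ w) (hvw : v ≠ w)
    (hliab : ∀ a b, 0 ≤ N.liab a b) (hext : ∀ b, 0 ≤ N.ext b)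
    (β ρ : ℝ) (hβ : β ∈ Set.Icc (0:ℝ) 1)
    (hρ0 : 0 ≤ ρ) (hρ1 : ρ ≤ β * N.liab u v) (hρ2 : ρ ≤ N.ext w)
    (r r' : Fin n → ℝ)
    (hr : IsClearing N r) (hr' : IsClearing (postTrade N u v w β ρ) r') :
    ¬ (assets N r v < assets (postTrade N u v w β ρ) r' v ∧
       assets N r w < assets (postTrade N u v w β ρ) r' w) := by
  classical
  rintro ⟨hv, hw⟩
  obtain ⟨hβ0, hβ1⟩ := hβ
  set N' := postTrade N u v w β ρ with hN'
  -- basic facts about the post-trade network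
  have hl' : ∀ a b, 0 ≤ N'.liab a b := by
    intro a b
    show (0:ℝ) ≤ (if a = u ∧ b = v then (1 - β) * N.liab u v
      else if a = u ∧ b = w then N.liab u w + β * N.liab u v else N.liab a b)
    split_ifs with h1 h2
    · exact mul_nonneg (by linarith) (hliab u v)
    · exact add_nonneg (hliab u w) (mul_nonneg hβ0 (hliab u v))
    · exact hliab a b
  have he' : ∀ b, 0 ≤ N'.ext b := by
    intro b
    show (0:ℝ) ≤ (if b = v then N.ext v + ρ else if b = w then N.ext w - ρ else N.ext b)
    split_ifs with h1 h2
    · exact add_nonneg (hext v) hρ0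
    · linarith [hρ2]
    · exact hext b
  have hliabdecomp : ∀ b, N'.liab u b = N.liab u b +
      ((if b = v then -(β * N.liab u v) else 0) + (if b = w then β * N.liab u v else 0)) := by
    intro b
    show (if u = u ∧ b = v then (1 - β) * N.liab u v
      else if u = u ∧ b = w then N.liab u w + β * N.liab u v else N.liab u b) = _
    by_cases hbv : b = v
    · subst hbv
      rw [if_pos ⟨rfl, rfl⟩, if_pos rfl, if_neg hvw]
      ring
    · by_cases hbw : b = w
      · subst hbw
        rw [if_neg (by simp [hbv]), if_pos ⟨rfl, rfl⟩, if_neg hbv, if_pos rfl]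
        ring
      · rw [if_neg (by simp [hbv]), if_neg (by simp [hbw]), if_neg hbv, if_neg hbw]
        ring
  have hLeq : ∀ a, totalLiab N' a = totalLiab N a := by
    intro a
    by_cases ha : a = u
    · rw [ha]
      unfold totalLiab
      rw [Finset.sum_congr rfl (fun b _ => hliabdecomp b)]
      rw [Finset.sum_add_distrib, Finset.sum_add_distrib]
      rw [Finset.sum_ite_eq' Finset.univ v (fun _ => -(β * N.liab u v)),
        Finset.sum_ite_eq' Finset.univ w (fun _ => β * N.liab u v)]
      simp
    · unfold totalLiab
      refine Finset.sum_congr rfl fun b _ => ?_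
      show (if a = u ∧ b = v then (1 - β) * N.liab u v
        else if a = u ∧ b = w then N.liab u w + β * N.liab u v else N.liab a b) = N.liab a b
      rw [if_neg (by simp [ha]), if_neg (by simp [ha])]
  have hExtdecomp : ∀ b, N'.ext b = N.ext b +
      ((if b = v then ρ else 0) + (if b = w then -ρ else 0)) := by
    intro b
    show (if b = v then N.ext v + ρ else if b = w then N.ext w - ρ else N.ext b) = _
    by_cases hbv : b = v
    · subst hbv
      rw [if_pos rfl, if_pos rfl, if_neg hvw]
      ring
    · by_cases hbw : b = w
      · subst hbw
        rw [if_neg hbv, if_pos rfl, if_neg hbv, if_pos rfl]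
        ring
      · rw [if_neg hbv, if_neg hbw, if_neg hbv, if_neg hbw]
        ring
  have hExtSum : ∑ b, N'.ext b = ∑ b, N.ext b := by
    rw [Finset.sum_congr rfl (fun b _ => hExtdecomp b)]
    rw [Finset.sum_add_distrib, Finset.sum_add_distrib]
    rw [Finset.sum_ite_eq' Finset.univ v (fun _ => ρ),
      Finset.sum_ite_eq' Finset.univ w (fun _ => -ρ)]
    simp
  have hAeq : ∀ (t : Fin n → ℝ) (b : Fin n), b ≠ v → b ≠ w → assets N' t b = assets N t b := by
    intro t b hbv hbw
    unfold assets
    have h1 : N'.ext b = N.ext b := by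
      show (if b = v then N.ext v + ρ else if b = w then N.ext w - ρ else N.ext b) = N.ext b
      rw [if_neg hbv, if_neg hbw]
    rw [h1]
    congr 1
    refine Finset.sum_congr rfl fun a _ => ?_
    congr 1
    show (if a = u ∧ b = v then (1 - β) * N.liab u v
      else if a = u ∧ b = w then N.liab u w + β * N.liab u v else N.liab a b) = N.liab a b
    rw [if_neg (by simp [hbv]), if_neg (by simp [hbw])]
  -- Step A : r ≤ r'
  have hr0 : ∀ x, 0 ≤ r x := fun x => (hr.1 x).1
  have hr'0 : ∀ x, 0 ≤ r' x := fun x => (hr'.1 x).1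
  set t : Fin n → ℝ := fun b => max (r b) (r' b) with htdef
  have htbox : inBox t :=
    fun b => ⟨le_trans (hr0 b) (le_max_left _ _), max_le (hr.1 b).2 (hr'.1 b).2⟩
  have htpre : ∀ b, t b ≤ updateMap N' t b := by
    intro b
    have h2 : r' b ≤ updateMap N' t b := by
      calc r' b = updateMap N' r' b := (congrFun hr'.2.1 b).symm
        _ ≤ updateMap N' t b :=
            aux_updateMap_mono N' hl' he' hr'0 (fun x => le_max_right (r x) (r' x)) b
    have h1 : r b ≤ updateMap N' t b := by
      have hAb : assets N r b ≤ assets N' t b := by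
        by_cases hbv : b = v
        · rw [hbv]
          exact le_trans hv.le (aux_assets_mono N' hl' (fun x => le_max_right (r x) (r' x)) v)
        · by_cases hbw : b = w
          · rw [hbw]
            exact le_trans hw.le (aux_assets_mono N' hl' (fun x => le_max_right (r x) (r' x)) w)
          · rw [hAeq t b hbv hbw]
            exact aux_assets_mono N hliab (fun x => le_max_left (r x) (r' x)) b
      calc r b = updateMap N r b := (congrFun hr.2.1 b).symm
        _ ≤ updateMap N' t b := by
            unfold updateMap
            rw [hLeq b]
            exact aux_uval_mono (aux_assets_nonneg N hliab hext hr0 b) hAb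
    exact max_le h1 h2
  have hrr' : ∀ b, r b ≤ r' b := fun b =>
    le_trans (le_max_left _ _) (aux_prefix_le_clearing N' hl' he' hr' htbox htpre b)
  -- Step B : per-node conservation
  have haa : ∀ b, assets N r b ≤ assets N' r' b := by
    intro b
    by_cases hbv : b = v
    · rw [hbv]; exact hv.le
    · by_cases hbw : b = w
      · rw [hbw]; exact hw.le
      · rw [hAeq r' b hbv hbw]
        exact aux_assets_mono N hliab hrr' b
  set c : Fin n → ℝ := fun b => assets N' r' b - assets N r b with hcdef
  have hgle : ∀ b, (r' b - r b) * totalLiab N b ≤ c b := by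
    intro b
    have hp := aux_clearing_payment N hliab hext hr b
    have hp' := aux_clearing_payment N' hl' he' hr' b
    rw [hLeq b] at hp'
    have hmin : min (assets N' r' b) (totalLiab N b) - min (assets N r b) (totalLiab N b)
        ≤ assets N' r' b - assets N r b := by
      rcases le_total (assets N r b) (totalLiab N b) with h | h
      · rw [min_eq_left h]
        have := min_le_left (assets N' r' b) (totalLiab N b)
        linarith
      · rw [min_eq_right h]
        have := min_le_right (assets N' r' b) (totalLiab N b)
        linarith [haa b]
    calc (r' b - r b) * totalLiab N b
        = r' b * totalLiab N b - r b * totalLiab N b := by ring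
      _ = min (assets N' r' b) (totalLiab N b) - min (assets N r b) (totalLiab N b) := by
          rw [hp, hp']
      _ ≤ c b := hmin
  have hsumc : ∑ b, c b = ∑ b, (r' b - r b) * totalLiab N b := by
    have e1 : ∑ b, c b = (∑ b, assets N' r' b) - ∑ b, assets N r b := by
      rw [← Finset.sum_sub_distrib]
    have e2 : ∑ a, r' a * totalLiab N' a = ∑ a, r' a * totalLiab N a :=
      Finset.sum_congr rfl fun a _ => by rw [hLeq a]
    rw [e1, aux_sum_assets, aux_sum_assets, hExtSum, e2]
    simp_rw [sub_mul]
    rw [Finset.sum_sub_distrib]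
    ring
  have hceq : ∀ b, c b = (r' b - r b) * totalLiab N b := by
    have h0 : ∑ b, (c b - (r' b - r b) * totalLiab N b) = 0 := by
      rw [Finset.sum_sub_distrib, hsumc, sub_self]
    intro b
    have := (Finset.sum_eq_zero_iff_of_nonneg
      (fun x _ => sub_nonneg.mpr (hgle x))).mp h0 b (Finset.mem_univ b)
    linarith
  -- the set of strictly improving nodes
  set S : Finset (Fin n) := Finset.univ.filter (fun b => 0 < c b) with hSdef
  have hmemS : ∀ b, b ∈ S ↔ 0 < c b := fun b => by simp [hSdef]
  have hvS : v ∈ S := (hmemS v).mpr (sub_pos.mpr hv)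
  have hwS : w ∈ S := (hmemS w).mpr (sub_pos.mpr hw)
  have hL0 : ∀ b, 0 ≤ totalLiab N b := fun b => Finset.sum_nonneg fun x _ => hliab b x
  have hLpos : ∀ b ∈ S, 0 < totalLiab N b := by
    intro b hb
    rcases (hL0 b).lt_or_eq with h | h
    · exact h
    · exfalso
      have hcb := (hmemS b).mp hb
      rw [hceq b, ← h, mul_zero] at hcb
      exact lt_irrefl 0 hcb
  have hDpos : ∀ b ∈ S, r b < r' b := by
    intro b hb
    by_contra hcon
    push_neg at hcon
    have hnn : 0 ≤ (r b - r' b) * totalLiab N b := mul_nonneg (by linarith) (hL0 b)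
    have hcb := (hmemS b).mp hb
    rw [hceq b] at hcb
    have hkey : (r b - r' b) * totalLiab N b = -((r' b - r b) * totalLiab N b) := by ring
    linarith
  have hdef : ∀ b ∈ S, assets N r b < totalLiab N b := by
    intro b hb
    have h1 : r b < 1 := lt_of_lt_of_le (hDpos b hb) (hr'.1 b).2
    by_contra hcon
    push_neg at hcon
    have hfix := congrFun hr.2.1 b
    unfold updateMap at hfix
    rw [if_pos hcon] at hfix
    rw [← hfix] at h1
    exact lt_irrefl 1 h1
  have hrdiv : ∀ b ∈ S, r b = assets N r b / totalLiab N b := by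
    intro b hb
    have hfix := congrFun hr.2.1 b
    unfold updateMap at hfix
    rw [if_neg (not_le.mpr (hdef b hb))] at hfix
    exact hfix.symm
  have hclosed : ∀ a ∈ S, ∀ b, 0 < N.liab a b → b ∈ S := by
    intro a ha b hab
    by_cases hbv : b = v
    · rw [hbv]; exact hvS
    by_cases hbw : b = w
    · rw [hbw]; exact hwS
    have hcb : c b = ∑ x, (r' x - r x) * N.liab x b := by
      show assets N' r' b - assets N r b = _
      rw [hAeq r' b hbv hbw]
      unfold assets
      simp_rw [sub_mul]
      rw [Finset.sum_sub_distrib]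
      ring
    refine (hmemS b).mpr ?_
    rw [hcb]
    have h1 : (r' a - r a) * N.liab a b ≤ ∑ x, (r' x - r x) * N.liab x b :=
      Finset.single_le_sum (fun x _ => mul_nonneg (sub_nonneg.mpr (hrr' x)) (hliab x b))
        (Finset.mem_univ a)
    have h2 : 0 < (r' a - r a) * N.liab a b :=
      mul_pos (sub_pos.mpr (hDpos a ha)) hab
    linarith
  have hl0out : ∀ a ∈ S, ∀ b, b ∉ S → N.liab a b = 0 := by
    intro a ha b hb
    by_contra hne
    exact hb (hclosed a ha b (lt_of_le_of_ne (hliab a b) (Ne.symm hne)))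
  -- stochastic matrix on S and stationary vector
  haveI hSne : Nonempty {x // x ∈ S} := ⟨⟨v, hvS⟩⟩
  set A : Matrix {x // x ∈ S} {x // x ∈ S} ℝ :=
    fun a b => N.liab (a : Fin n) (b : Fin n) / totalLiab N (a : Fin n) with hAdef
  have hA0 : ∀ a b, 0 ≤ A a b := fun a b => div_nonneg (hliab _ _) (hLpos _ a.2).le
  have hArow : ∀ a, ∑ b, A a b = 1 := by
    intro a
    have h1 : ∑ b : {x // x ∈ S}, N.liab (a : Fin n) (b : Fin n) = totalLiab N (a : Fin n) := by
      rw [Finset.sum_coe_sort S (fun b => N.liab (a : Fin n) b)]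
      rw [Finset.sum_subset (Finset.subset_univ S) (fun x _ hx => hl0out _ a.2 x hx)]
      simp [totalLiab]
    show ∑ b : {x // x ∈ S}, N.liab (a : Fin n) (b : Fin n) / totalLiab N (a : Fin n) = 1
    rw [← Finset.sum_div, h1, div_self (hLpos _ a.2).ne']
  obtain ⟨z, hz0, hzne, hzfix⟩ := aux_exists_stationary A hA0 hArow
  obtain ⟨b0, hb0⟩ : ∃ b0 : {x // x ∈ S}, 0 < z b0 := by
    by_contra hcon
    push_neg at hcon
    exact hzne (funext fun a => le_antisymm (hcon a) (hz0 a))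
  -- choice of ε
  set m1 : ℝ := S.inf' ⟨v, hvS⟩ (fun b => totalLiab N b - assets N r b) with hm1def
  have hm1pos : 0 < m1 := (Finset.lt_inf'_iff _).mpr fun b hb => sub_pos.mpr (hdef b hb)
  have hm1le : ∀ b ∈ S, m1 ≤ totalLiab N b - assets N r b := fun b hb => Finset.inf'_le _ hb
  set m2 : ℝ := Finset.univ.sup' Finset.univ_nonempty z with hm2def
  have hm2 : ∀ b, z b ≤ m2 := fun b => Finset.le_sup' z (Finset.mem_univ b)
  have hm2pos : 0 < m2 := lt_of_lt_of_le hb0 (hm2 b0)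
  set ε : ℝ := m1 / (m2 + 1) with hεdef
  have hεpos : 0 < ε := div_pos hm1pos (by linarith)
  have hεz : ∀ (b : Fin n) (hb : b ∈ S),
      ε * z ⟨b, hb⟩ < totalLiab N b - assets N r b := by
    intro b hb
    have h1 : ε * z ⟨b, hb⟩ ≤ ε * m2 := mul_le_mul_of_nonneg_left (hm2 ⟨b, hb⟩) hεpos.le
    have h2 : ε * (m2 + 1) = m1 := by
      rw [hεdef]
      field_simp
    have h4 := mul_lt_mul_of_pos_left (lt_add_one m2) hεpos
    rw [h2] at h4
    calc ε * z ⟨b, hb⟩ ≤ ε * m2 := h1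
      _ < m1 := h4
      _ ≤ _ := hm1le b hb
  -- the perturbed fixed point
  set d : Fin n → ℝ := fun b => if h : b ∈ S then ε * z ⟨b, h⟩ / totalLiab N b else 0 with hddef
  have hd0 : ∀ b, 0 ≤ d b := by
    intro b
    simp only [hddef]
    split
    · exact div_nonneg (mul_nonneg hεpos.le (hz0 _)) (hL0 b)
    · exact le_refl 0
  set r2 : Fin n → ℝ := fun b => r b + d b with hr2def
  have hr20 : ∀ b, 0 ≤ r2 b := fun b => add_nonneg (hr0 b) (hd0 b)
  have hkey : ∀ b, assets N r2 b = assets N r b + (if h : b ∈ S then ε * z ⟨b, h⟩ else 0) := by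
    intro b
    have e1 : assets N r2 b = assets N r b + ∑ a, d a * N.liab a b := by
      unfold assets
      have h : ∀ a ∈ Finset.univ, r2 a * N.liab a b = r a * N.liab a b + d a * N.liab a b := by
        intro a _
        show (r a + d a) * N.liab a b = _
        ring
      rw [Finset.sum_congr rfl h, Finset.sum_add_distrib]
      ring
    have e2 : ∑ a, d a * N.liab a b = (if h : b ∈ S then ε * z ⟨b, h⟩ else 0) := by
      have h1 : ∑ a, d a * N.liab a b = ∑ a ∈ S, d a * N.liab a b := by
        symm
        refine Finset.sum_subset (Finset.subset_univ S) (fun x _ hx => ?_)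
        have hdx : d x = 0 := by
          simp only [hddef]
          rw [dif_neg hx]
        rw [hdx, zero_mul]
      rw [h1, ← Finset.sum_coe_sort S (fun a => d a * N.liab a b)]
      by_cases hb : b ∈ S
      · rw [dif_pos hb]
        have h2 : ∀ a : {x // x ∈ S},
            d (a : Fin n) * N.liab (a : Fin n) b = ε * (z a * A a ⟨b, hb⟩) := by
          intro a
          simp only [hddef, hAdef]
          rw [dif_pos a.2]
          have ha : (⟨(a : Fin n), a.2⟩ : {x // x ∈ S}) = a := Subtype.ext rfl
          rw [ha]
          have hLa := (hLpos _ a.2).ne'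
          field_simp
        rw [Finset.sum_congr rfl (fun a _ => h2 a), ← Finset.mul_sum, hzfix ⟨b, hb⟩]
      · rw [dif_neg hb]
        refine Finset.sum_eq_zero (fun a _ => ?_)
        rw [hl0out _ a.2 b hb, mul_zero]
    rw [e1, e2]
  have hfix2 : updateMap N r2 = r2 := by
    funext b
    by_cases hb : b ∈ S
    · have hAb : assets N r2 b = assets N r b + ε * z ⟨b, hb⟩ := by
        rw [hkey b, dif_pos hb]
      have hlt : assets N r2 b < totalLiab N b := by
        have := hεz b hb
        rw [hAb]
        linarith
      unfold updateMap
      rw [if_neg (not_le.mpr hlt), hAb, add_div]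
      show _ = r2 b
      simp only [hr2def, hddef]
      rw [dif_pos hb, hrdiv b hb]
    · have hAb : assets N r2 b = assets N r b := by
        rw [hkey b, dif_neg hb, add_zero]
      have h1 : updateMap N r2 b = updateMap N r b := by
        unfold updateMap
        rw [hAb]
      rw [h1, congrFun hr.2.1 b]
      show r b = r2 b
      simp only [hr2def, hddef]
      rw [dif_neg hb, add_zero]
  have hbox2 : inBox r2 := by
    have h := aux_updateMap_inBox N hliab hext hr20
    rw [hfix2] at h
    exact h
  have hle2 := hr.2.2 r2 hbox2 hfix2 (b0 : Fin n)
  have hdb0 : 0 < d (b0 : Fin n) := by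
    simp only [hddef]
    rw [dif_pos b0.2]
    have hb0' : (⟨(b0 : Fin n), b0.2⟩ : {x // x ∈ S}) = b0 := Subtype.ext rfl
    rw [hb0']
    exact div_pos (mul_pos hεpos hb0) (hLpos _ b0.2)
  have hfin : r2 (b0 : Fin n) = r (b0 : Fin n) + d (b0 : Fin n) := by
    simp only [hr2def]
  rw [hfin] at hle2
  linarith
end

section
/- In a financial network without default cost, every creditor-positive single claims trade (a'_v > a_v and a'_w = a_w) yields a weak Pareto-improvement for the entire network: a'_b >= a_b for every bank b in V. -/
open Finset

variable {V : Type} [Fintype V] [DecidableEq V]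

set_option linter.unusedSectionVars false

noncomputable def fmap (L a : ℝ) : ℝ := if L ≤ a then 1 else a / L

lemma updateMap_eq (N : Network V) (r : V → ℝ) (b : V) :
    updateMap N r b = fmap (totalLiab N b) (assets N r b) := rfl

lemma fmap_mono {L a1 a2 : ℝ} (h0 : 0 ≤ a1) (h : a1 ≤ a2) : fmap L a1 ≤ fmap L a2 := by
  unfold fmap
  split_ifs with h1 h2 h2
  · exact le_rfl
  · exact absurd (h1.trans h) h2
  · have hL : 0 < L := h0.trans_lt (not_le.mp h1)
    exact (div_le_one hL).mpr (not_le.mp h1).le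
  · have hL : 0 < L := h0.trans_lt (not_le.mp h1)
    gcongr

lemma fmap_mem {L a : ℝ} (h0 : 0 ≤ a) : fmap L a ∈ Set.Icc (0:ℝ) 1 := by
  unfold fmap
  split_ifs with h1
  · exact ⟨zero_le_one, le_refl 1⟩
  · have hL : 0 < L := h0.trans_lt (not_le.mp h1)
    exact ⟨div_nonneg h0 hL.le, (div_le_one hL).mpr (not_le.mp h1).le⟩

lemma assets_nonneg (N : Network V) (hl : ∀ a b, 0 ≤ N.liab a b) (he : ∀ b, 0 ≤ N.ext b)
    {r : V → ℝ} (hr : inBox r) (b : V) : 0 ≤ assets N r b :=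
  add_nonneg (he b) (Finset.sum_nonneg fun a _ => mul_nonneg (hr a).1 (hl a b))

lemma assets_mono (N : Network V) (hl : ∀ a b, 0 ≤ N.liab a b)
    {r1 r2 : V → ℝ} (h : r1 ≤ r2) (b : V) : assets N r1 b ≤ assets N r2 b :=
  add_le_add_right (Finset.sum_le_sum fun a _ =>
    mul_le_mul_of_nonneg_right (h a) (hl a b)) _

lemma updateMap_mono (N : Network V) (hl : ∀ a b, 0 ≤ N.liab a b) (he : ∀ b, 0 ≤ N.ext b)
    {r1 r2 : V → ℝ} (h1 : inBox r1) (h : r1 ≤ r2) (b : V) :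
    updateMap N r1 b ≤ updateMap N r2 b := by
  rw [updateMap_eq, updateMap_eq]
  exact fmap_mono (assets_nonneg N hl he h1 b) (assets_mono N hl h b)

lemma updateMap_mem (N : Network V) (hl : ∀ a b, 0 ≤ N.liab a b) (he : ∀ b, 0 ≤ N.ext b)
    {r : V → ℝ} (hr : inBox r) (b : V) : updateMap N r b ∈ Set.Icc (0:ℝ) 1 := by
  rw [updateMap_eq]; exact fmap_mem (assets_nonneg N hl he hr b)

lemma exists_fixed_ge (N : Network V) (hl : ∀ a b, 0 ≤ N.liab a b) (he : ∀ b, 0 ≤ N.ext b)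
    (p : V → ℝ) (hp : inBox p) (hpost : p ≤ updateMap N p) :
    ∃ s, inBox s ∧ updateMap N s = s ∧ p ≤ s := by
  haveI : Fact ((0:ℝ) ≤ 1) := ⟨zero_le_one⟩
  let Ψ : (V → Set.Icc (0:ℝ) 1) →o (V → Set.Icc (0:ℝ) 1) :=
    { toFun := fun s b => ⟨updateMap N (fun a => (s a : ℝ)) b,
        updateMap_mem N hl he (fun a => (s a).2) b⟩
      monotone' := by
        intro s t hst b
        exact updateMap_mono N hl he (fun a => (s a).2) (fun a => hst a) b }
  let g := Ψ.gfp
  refine ⟨fun b => (g b : ℝ), fun b => (g b).2, ?_, ?_⟩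
  · funext b
    have := congrFun Ψ.isFixedPt_gfp b
    exact congrArg Subtype.val this
  · have hple : (fun b => (⟨p b, hp b⟩ : Set.Icc (0:ℝ) 1)) ≤ g := by
      apply Ψ.le_gfp
      intro b
      exact hpost b
    exact fun b => hple b

lemma postTrade_liab {n : ℕ} (N : Network (Fin n)) (u v w : Fin n) (hvw : v ≠ w) (β ρ : ℝ)
    (a b : Fin n) :
    (postTrade N u v w β ρ).liab a b
      = N.liab a b + (if a = u ∧ b = v then -(β * N.liab u v) else 0)
        + (if a = u ∧ b = w then β * N.liab u v else 0) := by
  simp only [postTrade]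
  split_ifs with h1 h2 h3
  · exact absurd (h1.2.symm.trans h2.2) hvw
  · obtain ⟨rfl, rfl⟩ := h1; ring
  · obtain ⟨rfl, rfl⟩ := h3; ring
  · ring

lemma postTrade_liab_nonneg {n : ℕ} (N : Network (Fin n)) (u v w : Fin n) (β ρ : ℝ)
    (hliab : ∀ a b, 0 ≤ N.liab a b) (hβ : β ∈ Set.Icc (0:ℝ) 1) (a b : Fin n) :
    0 ≤ (postTrade N u v w β ρ).liab a b := by
  simp only [postTrade]
  split_ifs
  · exact mul_nonneg (by linarith [hβ.2]) (hliab u v)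
  · exact add_nonneg (hliab u w) (mul_nonneg hβ.1 (hliab u v))
  · exact hliab a b

lemma postTrade_ext_nonneg {n : ℕ} (N : Network (Fin n)) (u v w : Fin n) (β ρ : ℝ)
    (hext : ∀ b, 0 ≤ N.ext b) (hρ0 : 0 ≤ ρ) (hρ2 : ρ ≤ N.ext w) (b : Fin n) :
    0 ≤ (postTrade N u v w β ρ).ext b := by
  simp only [postTrade]
  split_ifs
  · linarith [hext v]
  · linarith
  · exact hext b

lemma totalLiab_postTrade {n : ℕ} (N : Network (Fin n)) (u v w : Fin n) (hvw : v ≠ w)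
    (β ρ : ℝ) (a : Fin n) :
    totalLiab (postTrade N u v w β ρ) a = totalLiab N a := by
  unfold totalLiab
  simp only [postTrade_liab N u v w hvw β ρ, Finset.sum_add_distrib]
  rcases eq_or_ne a u with rfl | ha
  · simp
  · simp [ha]

lemma assets_postTrade_ne {n : ℕ} (N : Network (Fin n)) (u v w : Fin n)
    (β ρ : ℝ) (r : Fin n → ℝ) (b : Fin n) (hbv : b ≠ v) (hbw : b ≠ w) :
    assets (postTrade N u v w β ρ) r b = assets N r b := by
  unfold assets
  simp [postTrade, hbv, hbw]

/-- In a network without default cost, every creditor-positive single claims trade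
(`a'_v > a_v` and `a'_w = a_w`) weakly Pareto-improves the assets of every bank. -/
theorem stmt_7 {n : ℕ} (N : Network (Fin n)) (u v w : Fin n)
    (huv : u ≠ v) (huw : u ≠ w) (hvw : v ≠ w)
    (hliab : ∀ a b, 0 ≤ N.liab a b) (hext : ∀ b, 0 ≤ N.ext b)
    (β ρ : ℝ) (hβ : β ∈ Set.Icc (0:ℝ) 1)
    (hρ0 : 0 ≤ ρ) (hρ1 : ρ ≤ β * N.liab u v) (hρ2 : ρ ≤ N.ext w)
    (r r' : Fin n → ℝ)
    (hr : IsClearing N r) (hr' : IsClearing (postTrade N u v w β ρ) r')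
    (hv : assets N r v < assets (postTrade N u v w β ρ) r' v)
    (hw : assets (postTrade N u v w β ρ) r' w = assets N r w) :
    ∀ b, assets N r b ≤ assets (postTrade N u v w β ρ) r' b := by
  set N' := postTrade N u v w β ρ with hN'
  have hl' : ∀ a b, 0 ≤ N'.liab a b := postTrade_liab_nonneg N u v w β ρ hliab hβ
  have he' : ∀ b, 0 ≤ N'.ext b := postTrade_ext_nonneg N u v w β ρ hext hρ0 hρ2
  have hbr : inBox r := hr.1
  have hbr' : inBox r' := hr'.1
  set M : Fin n → ℝ := fun b => max (r b) (r' b) with hM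
  have hrM : r ≤ M := fun b => le_max_left _ _
  have hr'M : r' ≤ M := fun b => le_max_right _ _
  have hMbox : inBox M := fun b => ⟨le_trans (hbr b).1 (hrM b), max_le (hbr b).2 (hbr' b).2⟩
  have hpost : M ≤ updateMap N' M := by
    intro b
    refine max_le ?_ ?_
    · have h1 : assets N r b ≤ assets N' M b := by
        by_cases hbv : b = v
        · subst hbv
          exact hv.le.trans (assets_mono N' hl' hr'M _)
        by_cases hbw : b = w
        · subst hbw
          exact hw.ge.trans (assets_mono N' hl' hr'M _)
        · calc assets N r b ≤ assets N M b := assets_mono N hliab hrM b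
            _ = assets N' M b := (assets_postTrade_ne N u v w β ρ M b hbv hbw).symm
      calc r b = updateMap N r b := (congrFun hr.2.1 b).symm
        _ = fmap (totalLiab N b) (assets N r b) := rfl
        _ ≤ fmap (totalLiab N b) (assets N' M b) :=
            fmap_mono (assets_nonneg N hliab hext hbr b) h1
        _ = fmap (totalLiab N' b) (assets N' M b) := by
            rw [totalLiab_postTrade N u v w hvw β ρ]
        _ = updateMap N' M b := rfl
    · calc r' b = updateMap N' r' b := (congrFun hr'.2.1 b).symm
        _ ≤ updateMap N' M b := updateMap_mono N' hl' he' hbr' hr'M b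
  obtain ⟨s, hsbox, hsfix, hMs⟩ := exists_fixed_ge N' hl' he' M hMbox hpost
  have hs_le : s ≤ r' := hr'.2.2 s hsbox hsfix
  have hrr' : r ≤ r' := fun b => (hrM b).trans ((hMs b).trans (hs_le b))
  intro b
  by_cases hbv : b = v
  · subst hbv; exact hv.le
  by_cases hbw : b = w
  · subst hbw; exact hw.ge
  · calc assets N r b ≤ assets N r' b := assets_mono N hliab hrr' b
      _ = assets N' r' b := (assets_postTrade_ne N u v w β ρ r' b hbv hbw).symm
end

section
/- For every multi-trade of incoming edges of a creditor v (edges e_1,...,e_k with debtors u_1,...,u_k, traded fractions beta_i, common haircut rate alpha, fixed post-trade recovery rates r'_{u_1} <= ... <= r'_{u_k} sorted non-decreasingly), there exists an index i' in [k] and adjusted fractions beta_hat with beta_hat_i = 1 for i < i', beta_hat_i = 0 for i > i', and beta_hat_{i'} in [0,1], together with a haircut rate alpha_hat <= alpha, such that sum_i r'_{u_i} * beta_hat_i * l_{e_i} = sum_i r'_{u_i} * beta_i * l_{e_i} and alpha_hat * sum_i beta_hat_i * l_{e_i} = alpha * sum_i beta_i * l_{e_i}. -/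
open Finset

private lemma abel_aux (k : ℕ) (r d : ℕ → ℝ) (hr : ∀ i, r i ≤ r (i + 1))
    (hD : ∀ n, n ≤ k → 0 ≤ ∑ j ∈ Finset.range n, d j)
    (hDk : ∑ j ∈ Finset.range k, d j = 0) :
    ∑ i ∈ Finset.range k, r i * d i ≤ 0 := by
  have hd : ∀ i, d i = (∑ j ∈ Finset.range (i + 1), d j) - ∑ j ∈ Finset.range i, d j := by
    intro i; rw [Finset.sum_range_succ]; ring
  have key : ∑ i ∈ Finset.range k, r i * d i
      = ∑ i ∈ Finset.range k,
          (r i - r (i + 1)) * (∑ j ∈ Finset.range (i + 1), d j)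
        + (r k * (∑ j ∈ Finset.range k, d j) - r 0 * (∑ j ∈ Finset.range 0, d j)) := by
    rw [← Finset.sum_range_sub (fun i => r i * ∑ j ∈ Finset.range i, d j) k,
      ← Finset.sum_add_distrib]
    refine Finset.sum_congr rfl fun i _ => ?_
    rw [hd i]; ring
  rw [key, hDk]
  simp only [Finset.range_zero, Finset.sum_empty, mul_zero, sub_zero, add_zero]
  refine Finset.sum_nonpos fun i hi => mul_nonpos_of_nonpos_of_nonneg ?_ ?_
  · exact sub_nonpos.2 (hr i)
  · exact hD (i + 1) (Finset.mem_range.1 hi)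

private lemma sum_clamp (L : ℕ → ℝ) (hL : ∀ j, 0 < L j) {t : ℝ} (ht : 0 ≤ t) (n : ℕ) :
    ∑ j ∈ Finset.range n, min (L j) (max 0 (t - ∑ i ∈ Finset.range j, L i))
      = min t (∑ j ∈ Finset.range n, L j) := by
  induction n with
  | zero => simp [min_eq_right ht]
  | succ n ih =>
    rw [Finset.sum_range_succ, ih, Finset.sum_range_succ L]
    have := hL n
    simp only [min_def, max_def]
    split_ifs <;> linarith

private lemma greedy_core (k : ℕ) (R L m : ℕ → ℝ)
    (hRmono : ∀ i, R i ≤ R (i + 1)) (hR0 : ∀ i, 0 ≤ R i)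
    (hL : ∀ j, 0 < L j)
    (hm0 : ∀ j, 0 ≤ m j) (hmle : ∀ j, j < k → m j ≤ L j) :
    ∃ t, (∑ j ∈ Finset.range k, m j) ≤ t ∧ t ≤ ∑ j ∈ Finset.range k, L j ∧
      ∑ j ∈ Finset.range k,
          R j * min (L j) (max 0 (t - ∑ i ∈ Finset.range j, L i))
        = ∑ j ∈ Finset.range k, R j * m j := by
  have hM0 : 0 ≤ ∑ j ∈ Finset.range k, m j :=
    Finset.sum_nonneg fun j _ => hm0 j
  have hML : (∑ j ∈ Finset.range k, m j) ≤ ∑ j ∈ Finset.range k, L j :=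
    Finset.sum_le_sum fun j hj => hmle j (Finset.mem_range.1 hj)
  set P : ℝ → ℝ := fun t => ∑ j ∈ Finset.range k,
      R j * min (L j) (max 0 (t - ∑ i ∈ Finset.range j, L i)) with hP
  have hPcont : Continuous P := by
    apply continuous_finset_sum
    intro j _
    exact continuous_const.mul (continuous_const.min
      (continuous_const.max (continuous_id.sub continuous_const)))
  have hPM : P (∑ j ∈ Finset.range k, m j) ≤ ∑ j ∈ Finset.range k, R j * m j := by
    have habel := abel_aux k R
      (fun j => min (L j) (max 0 ((∑ j ∈ Finset.range k, m j) - ∑ i ∈ Finset.range j, L i)) - m j)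
      hRmono ?_ ?_
    · have hsplit : ∑ i ∈ Finset.range k, R i *
          (min (L i) (max 0 ((∑ j ∈ Finset.range k, m j) - ∑ j ∈ Finset.range i, L j)) - m i)
          = P (∑ j ∈ Finset.range k, m j) - ∑ j ∈ Finset.range k, R j * m j := by
        rw [hP, ← Finset.sum_sub_distrib]
        refine Finset.sum_congr rfl fun i _ => by ring
      rw [hsplit] at habel
      linarith
    · intro n hn
      rw [Finset.sum_sub_distrib, sum_clamp L hL hM0 n, sub_nonneg]
      refine le_min ?_ ?_
      · exact Finset.sum_le_sum_of_subset_of_nonneg (Finset.range_subset_range.2 hn)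
          fun j _ _ => hm0 j
      · exact Finset.sum_le_sum fun j hj =>
          hmle j (lt_of_lt_of_le (Finset.mem_range.1 hj) hn)
    · rw [Finset.sum_sub_distrib, sum_clamp L hL hM0 k, min_eq_left hML, sub_self]
  have hPL : (∑ j ∈ Finset.range k, R j * m j) ≤ P (∑ j ∈ Finset.range k, L j) := by
    have hcl : ∀ j, j < k →
        min (L j) (max 0 ((∑ i ∈ Finset.range k, L i) - ∑ i ∈ Finset.range j, L i)) = L j := by
      intro j hj
      have h1 : L j ≤ (∑ i ∈ Finset.range k, L i) - ∑ i ∈ Finset.range j, L i := by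
        rw [← Finset.sum_Ico_eq_sub _ hj.le]
        exact Finset.single_le_sum (fun i _ => (hL i).le) (Finset.mem_Ico.2 ⟨le_rfl, hj⟩)
      exact min_eq_left (h1.trans (le_max_right _ _))
    calc (∑ j ∈ Finset.range k, R j * m j)
        ≤ ∑ j ∈ Finset.range k, R j * L j :=
          Finset.sum_le_sum fun j hj =>
            mul_le_mul_of_nonneg_left (hmle j (Finset.mem_range.1 hj)) (hR0 j)
      _ = P (∑ j ∈ Finset.range k, L j) := by
          rw [hP]
          exact (Finset.sum_congr rfl fun j hj => by
            rw [hcl j (Finset.mem_range.1 hj)]).symm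
  obtain ⟨t, ht, hPt⟩ := intermediate_value_Icc hML hPcont.continuousOn ⟨hPM, hPL⟩
  exact ⟨t, ht.1, ht.2, hPt⟩

/-- Greedy structure of multi-trades of incoming edges: for every multi-trade with
fractions `β i` and common haircut rate `α`, and post-trade recovery rates `r` of the
debtors sorted non-decreasingly, there is an equivalent greedy-prefix trade: `β̂ i = 1`
for `i < i'`, `β̂ i = 0` for `i > i'`, the same total payment `∑ r i · β̂ i · ℓ i` to the
buyer, and a haircut rate `α̂ ≤ α` yielding the same total return. -/
theorem stmt_12 (k : ℕ) (hk : 0 < k) (r ℓ β : Fin k → ℝ)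
    (hr : Monotone r) (hr01 : ∀ i, r i ∈ Set.Icc (0:ℝ) 1)
    (hℓ : ∀ i, 0 < ℓ i) (hβ : ∀ i, β i ∈ Set.Icc (0:ℝ) 1)
    (α : ℝ) (hα : α ∈ Set.Icc (0:ℝ) 1) :
    ∃ (i' : Fin k) (βh : Fin k → ℝ) (αh : ℝ),
      (∀ i, i < i' → βh i = 1) ∧
      (∀ i, i' < i → βh i = 0) ∧
      βh i' ∈ Set.Icc (0:ℝ) 1 ∧
      0 ≤ αh ∧ αh ≤ α ∧
      (∑ i, r i * βh i * ℓ i = ∑ i, r i * β i * ℓ i) ∧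
      αh * ∑ i, βh i * ℓ i = α * ∑ i, β i * ℓ i := by
  classical
  set L : ℕ → ℝ := fun j => if h : j < k then ℓ ⟨j, h⟩ else 1 with hLdef
  set R : ℕ → ℝ := fun j => if h : j < k then r ⟨j, h⟩ else 1 with hRdef
  set m : ℕ → ℝ := fun j => if h : j < k then β ⟨j, h⟩ * ℓ ⟨j, h⟩ else 0 with hmdef
  have hLpos : ∀ j, 0 < L j := by
    intro j; rw [hLdef]; dsimp only
    split_ifs with h
    · exact hℓ _
    · exact one_pos
  have hLcast : ∀ i : Fin k, L ↑i = ℓ i := by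
    intro i; rw [hLdef]; simp [i.isLt]
  have hRcast : ∀ i : Fin k, R ↑i = r i := by
    intro i; rw [hRdef]; simp [i.isLt]
  have hmcast : ∀ i : Fin k, m ↑i = β i * ℓ i := by
    intro i; rw [hmdef]; simp [i.isLt]
  have hRmono : ∀ i, R i ≤ R (i + 1) := by
    intro i; rw [hRdef]; dsimp only
    split_ifs with h1 h2 h2
    · exact hr (Fin.mk_le_mk.2 (Nat.le_succ i))
    · exact (hr01 _).2
    · exact absurd (Nat.lt_of_succ_lt h2) h1
    · exact le_rfl
  have hR0 : ∀ i, 0 ≤ R i := by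
    intro i; rw [hRdef]; dsimp only
    split_ifs with h
    · exact (hr01 _).1
    · exact zero_le_one
  have hm0 : ∀ j, 0 ≤ m j := by
    intro j; rw [hmdef]; dsimp only
    split_ifs with h
    · exact mul_nonneg (hβ _).1 (hℓ _).le
    · exact le_rfl
  have hmle : ∀ j, j < k → m j ≤ L j := by
    intro j hj; rw [hmdef, hLdef]; dsimp only
    rw [dif_pos hj, dif_pos hj]
    exact mul_le_of_le_one_left (hℓ _).le (hβ _).2
  -- conversion between Fin-sums and range-sums
  have hconv : ∀ (g : Fin k → ℝ) (G : ℕ → ℝ), (∀ i : Fin k, G ↑i = g i) →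
      ∑ j ∈ Finset.range k, G j = ∑ i, g i := by
    intro g G h
    rw [← Fin.sum_univ_eq_sum_range]
    exact Finset.sum_congr rfl fun i _ => h i
  have hMeq : ∑ j ∈ Finset.range k, m j = ∑ i, β i * ℓ i :=
    hconv _ _ fun i => hmcast i
  have hγeq : ∑ j ∈ Finset.range k, R j * m j = ∑ i, r i * β i * ℓ i :=
    hconv _ _ fun i => by rw [hRcast i, hmcast i, mul_assoc]
  obtain ⟨t, hMt, htL, hPt⟩ := greedy_core k R L m hRmono hR0 hLpos hm0 hmle
  have hM0 : 0 ≤ ∑ j ∈ Finset.range k, m j := Finset.sum_nonneg fun j _ => hm0 j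
  have ht0 : 0 ≤ t := hM0.trans hMt
  -- find the pivot index
  have hex : ∃ n, t ≤ ∑ j ∈ Finset.range (n + 1), L j := by
    refine ⟨k - 1, ?_⟩
    rw [Nat.sub_add_cancel hk]; exact htL
  set i0 := Nat.find hex with hi0def
  have hi0spec : t ≤ ∑ j ∈ Finset.range (i0 + 1), L j := Nat.find_spec hex
  have hi0k : i0 < k := by
    have h1 : i0 ≤ k - 1 := Nat.find_min' hex (by rw [Nat.sub_add_cancel hk]; exact htL)
    omega
  set i' : Fin k := ⟨i0, hi0k⟩ with hi'def
  set βh : Fin k → ℝ :=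
    fun i => min (L ↑i) (max 0 (t - ∑ j ∈ Finset.range ↑i, L j)) / ℓ i with hβhdef
  have hβhℓ : ∀ i : Fin k, βh i * ℓ i
      = min (L ↑i) (max 0 (t - ∑ j ∈ Finset.range ↑i, L j)) := by
    intro i; rw [hβhdef]; exact div_mul_cancel₀ _ (hℓ i).ne'
  refine ⟨i', βh, α * (∑ i, β i * ℓ i) / t, ?_, ?_, ?_, ?_, ?_, ?_, ?_⟩
  · -- i < i' → βh i = 1
    intro i hi
    have hii : (↑i : ℕ) < i0 := hi
    have hnot := Nat.find_min hex hii
    push_neg at hnot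
    have hS : (∑ j ∈ Finset.range (↑i + 1), L j) < t := hnot
    rw [Finset.sum_range_succ] at hS
    have h1 : max 0 (t - ∑ j ∈ Finset.range ↑i, L j) = t - ∑ j ∈ Finset.range ↑i, L j :=
      max_eq_right (by linarith [hLpos (↑i : ℕ)])
    rw [hβhdef]; dsimp only
    rw [h1, min_eq_left (by linarith), hLcast i, div_self (hℓ i).ne']
  · -- i' < i → βh i = 0
    intro i hi
    have hii : i0 < (↑i : ℕ) := hi
    have hSle : (∑ j ∈ Finset.range (i0 + 1), L j) ≤ ∑ j ∈ Finset.range ↑i, L j :=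
      Finset.sum_le_sum_of_subset_of_nonneg (Finset.range_subset_range.2 hii)
        fun j _ _ => (hLpos j).le
    have h1 : max 0 (t - ∑ j ∈ Finset.range ↑i, L j) = 0 :=
      max_eq_left (by linarith)
    rw [hβhdef]; dsimp only
    rw [h1, min_eq_right (hLpos _).le, zero_div]
  · -- βh i' ∈ [0,1]
    constructor
    · rw [hβhdef]
      exact div_nonneg (le_min (hLpos _).le (le_max_left _ _)) (hℓ i').le
    · rw [hβhdef]; dsimp only
      rw [div_le_one (hℓ i')]
      exact (min_le_left _ _).trans_eq (hLcast i')
  · exact div_nonneg (mul_nonneg hα.1 (hMeq ▸ hM0)) ht0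
  · -- αh ≤ α
    rcases eq_or_lt_of_le ht0 with h | h
    · rw [← h, div_zero]; exact hα.1
    · rw [div_le_iff₀ h]
      have : (∑ i, β i * ℓ i) ≤ t := hMeq ▸ hMt
      nlinarith [hα.1]
  · -- payment equality
    have h1 : ∑ j ∈ Finset.range k,
        R j * min (L j) (max 0 (t - ∑ i ∈ Finset.range j, L i))
        = ∑ i, r i * βh i * ℓ i :=
      hconv _ _ fun i => by rw [hRcast i, mul_assoc, hβhℓ i]
    rw [← h1, hPt, hγeq]
  · -- return equality
    have h2 : ∑ i, βh i * ℓ i = t := by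
      have h3 : ∑ j ∈ Finset.range k,
          min (L j) (max 0 (t - ∑ i ∈ Finset.range j, L i)) = ∑ i, βh i * ℓ i :=
        hconv _ _ fun i => (hβhℓ i).symm
      rw [← h3, sum_clamp L hLpos ht0 k, min_eq_left htL]
    rw [h2]
    rcases eq_or_lt_of_le ht0 with h | h
    · have hM00 : (∑ i, β i * ℓ i) = 0 := le_antisymm (by rw [← h] at hMt; exact hMeq ▸ hMt) (hMeq ▸ hM0)
      rw [hM00, ← h]; ring
    · rw [div_mul_cancel₀ _ h.ne']
end

section
/- In the Set Packing reduction network (with default cost delta < 1, M > m): if P is a set packing of size l, then the multi-trade that fully trades edge (u, S_i) to w for each S_i in P with return rho_i = M (and trades nothing else) is Pareto-positive and yields total creditor-asset increase exactly lM; in particular, in the post-trade clearing state every S_i in P is solvent, every element bank in the union of P receives payment 1, and w's assets are unchanged. -/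
open Finset

variable {V : Type} [Fintype V] [DecidableEq V]

/-- Banks of the Set Packing reduction network: set-banks `S_i`, element-banks `x_j`,
and the two special banks `u` (= `.inr 0`) and `w` (= `.inr 1`). -/
abbrev SPBank (k m : ℕ) := (Fin k ⊕ Fin m) ⊕ Fin 2

/-- The debtor bank `u`. -/
def uBank (k m : ℕ) : SPBank k m := Sum.inr 0
/-- The buyer bank `w`. -/
def wBank (k m : ℕ) : SPBank k m := Sum.inr 1
/-- The set-bank of `S_i`. -/
def sBank {k m : ℕ} (i : Fin k) : SPBank k m := Sum.inl (Sum.inl i)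
/-- The element-bank of `x_j`. -/
def xBank {k m : ℕ} (j : Fin m) : SPBank k m := Sum.inl (Sum.inr j)

/-- The Set Packing reduction network: `u` owes `M` to each `S_i`; `S_i` owes 1 to each of
its element-banks and `M − |S_i|` to `w`; each `x_j` owes 1 to `w`; `w` has external
assets `l·M`, everything else has external assets 0. -/
noncomputable def spNet {k m : ℕ} (Sets : Fin k → Finset (Fin m)) (M : ℝ) (l : ℕ) :
    Network (SPBank k m) where
  liab a b :=
    match a, b with
    | Sum.inr x, Sum.inl (Sum.inl _) => if x = 0 then M else 0
    | Sum.inl (Sum.inl i), Sum.inl (Sum.inr j) => if j ∈ Sets i then 1 else 0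
    | Sum.inl (Sum.inl i), Sum.inr y => if y = 1 then M - (Sets i).card else 0
    | Sum.inl (Sum.inr _), Sum.inr y => if y = 1 then 1 else 0
    | _, _ => 0
  ext b :=
    match b with
    | Sum.inr y => if y = 1 then l * M else 0
    | _ => 0

/-- The Set Packing network after a multi-trade of the outgoing edges `(u, S_i)` of `u`
to buyer `w` with fractions `β i` and returns `ρ i`. -/
noncomputable def spPost {k m : ℕ} (Sets : Fin k → Finset (Fin m)) (M : ℝ) (l : ℕ)
    (β ρ : Fin k → ℝ) : Network (SPBank k m) where
  liab a b :=
    match a, b with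
    | Sum.inr x, Sum.inl (Sum.inl i) => if x = 0 then (1 - β i) * M else 0
    | Sum.inr x, Sum.inr y => if x = 0 ∧ y = 1 then ∑ i, β i * M else 0
    | Sum.inl (Sum.inl i), Sum.inl (Sum.inr j) => if j ∈ Sets i then 1 else 0
    | Sum.inl (Sum.inl i), Sum.inr y => if y = 1 then M - (Sets i).card else 0
    | Sum.inl (Sum.inr _), Sum.inr y => if y = 1 then 1 else 0
    | _, _ => 0
  ext b :=
    match b with
    | Sum.inl (Sum.inl i) => ρ i
    | Sum.inr y => if y = 1 then l * M - ∑ i, ρ i else 0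
    | _ => 0

set_option linter.unusedVariables false

section SP
variable {k m : ℕ} (Sets : Fin k → Finset (Fin m)) (M : ℝ) (l : ℕ) (r : SPBank k m → ℝ)

-- pre-trade computations
lemma tl_pre_u : totalLiab (spNet Sets M l) (uBank k m) = k * M := by
  simp [totalLiab, spNet, uBank, Fintype.sum_sum_type, Fin.sum_univ_two]

lemma as_pre_u : assets (spNet Sets M l) r (uBank k m) = 0 := by
  simp [assets, spNet, uBank, Fintype.sum_sum_type, Fin.sum_univ_two]

lemma tl_pre_s (i : Fin k) : totalLiab (spNet Sets M l) (sBank i) = M := by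
  simp [totalLiab, spNet, sBank, Fintype.sum_sum_type, Fin.sum_univ_two]

lemma as_pre_s (i : Fin k) : assets (spNet Sets M l) r (sBank i) = r (uBank k m) * M := by
  simp [assets, spNet, sBank, uBank, Fintype.sum_sum_type, Fin.sum_univ_two]

lemma tl_pre_x (j : Fin m) : totalLiab (spNet Sets M l) (xBank j) = 1 := by
  simp [totalLiab, spNet, xBank, Fintype.sum_sum_type, Fin.sum_univ_two]

lemma as_pre_x (j : Fin m) :
    assets (spNet Sets M l) r (xBank j) = ∑ i, r (sBank i) * (if j ∈ Sets i then 1 else 0) := by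
  simp [assets, spNet, xBank, sBank, Fintype.sum_sum_type, Fin.sum_univ_two]

lemma as_pre_w : assets (spNet Sets M l) r (wBank k m)
    = l * M + ∑ i, r (sBank i) * (M - (Sets i).card) + ∑ j, r (xBank j) := by
  simp [assets, spNet, wBank, sBank, xBank, Fintype.sum_sum_type, Fin.sum_univ_two]
  ring

-- post-trade computations
variable (β ρ : Fin k → ℝ)

lemma as_post_u : assets (spPost Sets M l β ρ) r (uBank k m) = 0 := by
  simp [assets, spPost, uBank, Fintype.sum_sum_type, Fin.sum_univ_two]

lemma tl_post_u : totalLiab (spPost Sets M l β ρ) (uBank k m)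
    = ∑ i, (1 - β i) * M + ∑ i, β i * M := by
  simp [totalLiab, spPost, uBank, Fintype.sum_sum_type, Fin.sum_univ_two]

lemma tl_post_s (i : Fin k) : totalLiab (spPost Sets M l β ρ) (sBank i) = M := by
  simp [totalLiab, spPost, sBank, Fintype.sum_sum_type, Fin.sum_univ_two]

lemma as_post_s (i : Fin k) : assets (spPost Sets M l β ρ) r (sBank i)
    = ρ i + r (uBank k m) * ((1 - β i) * M) := by
  simp [assets, spPost, sBank, uBank, Fintype.sum_sum_type, Fin.sum_univ_two]

lemma tl_post_x (j : Fin m) : totalLiab (spPost Sets M l β ρ) (xBank j) = 1 := by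
  simp [totalLiab, spPost, xBank, Fintype.sum_sum_type, Fin.sum_univ_two]

lemma as_post_x (j : Fin m) :
    assets (spPost Sets M l β ρ) r (xBank j)
    = ∑ i, r (sBank i) * (if j ∈ Sets i then 1 else 0) := by
  simp [assets, spPost, xBank, sBank, Fintype.sum_sum_type, Fin.sum_univ_two]

lemma as_post_w : assets (spPost Sets M l β ρ) r (wBank k m)
    = (l * M - ∑ i, ρ i) + r (uBank k m) * (∑ i, β i * M)
      + ∑ i, r (sBank i) * (M - (Sets i).card) + ∑ j, r (xBank j) := by
  simp [assets, spPost, wBank, sBank, xBank, uBank, Fintype.sum_sum_type, Fin.sum_univ_two]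
  ring

lemma fix_val {V : Type} [Fintype V] (N : Network V) (δ : ℝ) (r : V → ℝ)
    (h : updateMapD N δ r = r) (v : V) :
    r v = if totalLiab N v ≤ assets N r v then 1 else δ * assets N r v / totalLiab N v :=
  (congrFun h v).symm

end SP

/-- Forward direction of the Set Packing reduction: if `P` is a set packing of size `l`,
then fully trading the edges `(u, S_i)` for `i ∈ P` with return `M` each is
Pareto-positive, raises total creditor assets by exactly `l·M`, makes every `S_i ∈ P`
solvent, delivers a payment of 1 to every element bank in the union of `P`, and leaves
`w`'s assets unchanged. -/
theorem stmt_15 {k m : ℕ} (Sets : Fin k → Finset (Fin m)) (l : ℕ) (M δ : ℝ)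
    (hM : (m : ℝ) < M) (hδ0 : 0 ≤ δ) (hδ1 : δ < 1)
    (P : Finset (Fin k)) (hP : P.card = l)
    (hdisj : ∀ i ∈ P, ∀ j ∈ P, i ≠ j → Disjoint (Sets i) (Sets j)) :
    let β : Fin k → ℝ := fun i => if i ∈ P then 1 else 0
    let ρ : Fin k → ℝ := fun i => if i ∈ P then M else 0
    ∀ r₀ r' : SPBank k m → ℝ,
      IsClearingD (spNet Sets M l) δ r₀ →
      IsClearingD (spPost Sets M l β ρ) δ r' →
      (∀ b, assets (spNet Sets M l) r₀ b ≤ assets (spPost Sets M l β ρ) r' b) ∧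
      (∑ i, (assets (spPost Sets M l β ρ) r' (sBank i)
              - assets (spNet Sets M l) r₀ (sBank i)) = (l : ℝ) * M) ∧
      (∀ i ∈ P, totalLiab (spPost Sets M l β ρ) (sBank i)
                  ≤ assets (spPost Sets M l β ρ) r' (sBank i)) ∧
      (∀ j : Fin m, (∃ i ∈ P, j ∈ Sets i) →
        ∑ i, r' (sBank i) * (spPost Sets M l β ρ).liab (sBank i) (xBank j) = 1) ∧
      assets (spPost Sets M l β ρ) r' (wBank k m) =
        assets (spNet Sets M l) r₀ (wBank k m) := by
  intro β ρ r₀ r' h₀ h'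
  have hβ : β = fun i => if i ∈ P then 1 else 0 := rfl
  have hρ : ρ = fun i => if i ∈ P then M else 0 := rfl
  have hM0 : (0:ℝ) < M := lt_of_le_of_lt (Nat.cast_nonneg m) hM
  have hfix₀ := h₀.2.1
  have hfix' := h'.2.1
  -- pre-trade values
  have hu0 : ∀ _ : Fin k, r₀ (uBank k m) = 0 := by
    intro i
    have h := fix_val _ δ r₀ hfix₀ (uBank k m)
    rw [tl_pre_u, as_pre_u] at h
    have hk : (0:ℝ) < k * M := mul_pos (by exact_mod_cast i.pos) hM0
    rw [h, if_neg (not_le.mpr hk)]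
    simp
  have hs0 : ∀ i : Fin k, r₀ (sBank i) = 0 := by
    intro i
    have h := fix_val _ δ r₀ hfix₀ (sBank i)
    rw [tl_pre_s, as_pre_s, hu0 i] at h
    rw [h, if_neg (by simpa using not_le.mpr hM0)]
    simp
  have hx0 : ∀ j : Fin m, r₀ (xBank j) = 0 := by
    intro j
    have h := fix_val _ δ r₀ hfix₀ (xBank j)
    rw [tl_pre_x, as_pre_x] at h
    have hz : ∑ i, r₀ (sBank i) * (if j ∈ Sets i then (1:ℝ) else 0) = 0 :=
      Finset.sum_eq_zero fun i _ => by rw [hs0 i, zero_mul]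
    rw [hz] at h
    rw [h, if_neg (by norm_num)]
    simp
  have pre_w : assets (spNet Sets M l) r₀ (wBank k m) = l * M := by
    rw [as_pre_w]
    rw [Finset.sum_eq_zero fun i _ => by rw [hs0 i, zero_mul],
        Finset.sum_eq_zero fun j _ => hx0 j]
    ring
  -- post-trade values
  have hu' : ∀ _ : Fin k, r' (uBank k m) = 0 := by
    intro i
    have h := fix_val _ δ r' hfix' (uBank k m)
    rw [tl_post_u, as_post_u] at h
    have hsum : ∑ i, (1 - β i) * M + ∑ i, β i * M = k * M := by
      rw [← Finset.sum_add_distrib]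
      rw [Finset.sum_congr rfl (fun i _ => by ring : ∀ i ∈ Finset.univ,
        (1 - β i) * M + β i * M = M)]
      simp [mul_comm]
    rw [hsum] at h
    have hk : (0:ℝ) < k * M := mul_pos (by exact_mod_cast i.pos) hM0
    rw [h, if_neg (not_le.mpr hk)]
    simp
  have hs1 : ∀ i ∈ P, r' (sBank i) = 1 := by
    intro i hi
    have h := fix_val _ δ r' hfix' (sBank i)
    rw [tl_post_s, as_post_s, hβ, hρ] at h
    simp only [hi, if_pos] at h
    rw [h, if_pos (by norm_num)]
  have hs2 : ∀ i ∉ P, r' (sBank i) = 0 := by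
    intro i hi
    have h := fix_val _ δ r' hfix' (sBank i)
    rw [tl_post_s, as_post_s, hβ, hρ, hu' i] at h
    simp only [hi, if_neg, if_false] at h
    rw [h, if_neg (by simpa using not_le.mpr hM0)]
    simp
  -- payment sum into element banks
  have hxsum : ∀ j : Fin m, (∃ i ∈ P, j ∈ Sets i) →
      ∑ i, r' (sBank i) * (if j ∈ Sets i then (1:ℝ) else 0) = 1 := by
    rintro j ⟨i₀, hi₀, hj⟩
    rw [Finset.sum_eq_single i₀]
    · rw [hs1 i₀ hi₀, if_pos hj]; norm_num
    · intro b _ hb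
      by_cases hbP : b ∈ P
      · have hdj : j ∉ Sets b :=
          Finset.disjoint_left.mp (hdisj i₀ hi₀ b hbP (Ne.symm hb)) hj
        rw [if_neg hdj, mul_zero]
      · rw [hs2 b hbP, zero_mul]
    · intro h; exact absurd (Finset.mem_univ i₀) h
  have hxsum0 : ∀ j : Fin m, ¬(∃ i ∈ P, j ∈ Sets i) →
      ∑ i, r' (sBank i) * (if j ∈ Sets i then (1:ℝ) else 0) = 0 := by
    intro j hj
    push_neg at hj
    refine Finset.sum_eq_zero fun i _ => ?_
    by_cases hiP : i ∈ P
    · rw [if_neg (hj i hiP), mul_zero]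
    · rw [hs2 i hiP, zero_mul]
  have hx' : ∀ j : Fin m, r' (xBank j)
      = if (∃ i ∈ P, j ∈ Sets i) then 1 else 0 := by
    intro j
    have h := fix_val _ δ r' hfix' (xBank j)
    rw [tl_post_x, as_post_x] at h
    by_cases hex : ∃ i ∈ P, j ∈ Sets i
    · rw [hxsum j hex] at h
      rw [h, if_pos le_rfl, if_pos hex]
    · rw [hxsum0 j hex] at h
      rw [h, if_neg (by norm_num), if_neg hex]
      simp
  -- assets of set banks
  have as_s : ∀ i : Fin k, assets (spPost Sets M l β ρ) r' (sBank i)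
      = if i ∈ P then M else 0 := by
    intro i
    rw [as_post_s, hβ, hρ]
    by_cases hiP : i ∈ P
    · simp [hiP]
    · simp [hiP, hu' i]
  -- w's post-trade assets
  have post_w : assets (spPost Sets M l β ρ) r' (wBank k m) = l * M := by
    rw [as_post_w]
    have h1 : ∑ i, ρ i = l * M := by
      rw [hρ]
      rw [Finset.sum_ite_mem, Finset.univ_inter, Finset.sum_const, hP,
        nsmul_eq_mul]
    have h2 : r' (uBank k m) * (∑ i, β i * M) = 0 := by
      rw [Finset.mul_sum]
      refine Finset.sum_eq_zero fun i _ => ?_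
      rw [hu' i, zero_mul]
    have h3 : ∑ i, r' (sBank i) * (M - (Sets i).card)
        = l * M - ∑ i ∈ P, ((Sets i).card : ℝ) := by
      rw [Finset.sum_congr rfl (fun i _ => by
        by_cases hiP : i ∈ P
        · rw [hs1 i hiP, one_mul, if_pos hiP]
        · rw [hs2 i hiP, zero_mul, if_neg hiP] :
        ∀ i ∈ Finset.univ, r' (sBank i) * (M - (Sets i).card)
          = if i ∈ P then M - ((Sets i).card : ℝ) else 0)]
      rw [Finset.sum_ite_mem, Finset.univ_inter, Finset.sum_sub_distrib,
        Finset.sum_const, hP, nsmul_eq_mul]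
    have h4 : ∑ j, r' (xBank j) = ∑ i ∈ P, ((Sets i).card : ℝ) := by
      have hcb : ((P.biUnion Sets).card : ℝ) = ∑ i ∈ P, ((Sets i).card : ℝ) := by
        rw [Finset.card_biUnion hdisj]; push_cast; ring
      rw [Finset.sum_congr rfl (fun j _ => by
        rw [hx' j]
        congr 1
        simp [Finset.mem_biUnion] :
        ∀ j ∈ Finset.univ, r' (xBank j)
          = if j ∈ P.biUnion Sets then (1:ℝ) else 0)]
      rw [Finset.sum_ite_mem, Finset.univ_inter, Finset.sum_const,
        nsmul_eq_mul, mul_one, hcb]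
    rw [h1, h2, h3, h4]
    ring
  refine ⟨?_, ?_, ?_, ?_, ?_⟩
  · -- Pareto positivity
    rintro ((i | j) | x)
    · rw [show (Sum.inl (Sum.inl i) : SPBank k m) = sBank i from rfl,
        as_pre_s, hu0 i, zero_mul, as_s]
      by_cases hiP : i ∈ P <;> simp [hiP, le_of_lt hM0]
    · rw [show (Sum.inl (Sum.inr j) : SPBank k m) = xBank j from rfl,
        as_pre_x, as_post_x,
        Finset.sum_eq_zero fun i _ => by rw [hs0 i, zero_mul]]
      by_cases hex : ∃ i ∈ P, j ∈ Sets i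
      · rw [hxsum j hex]; norm_num
      · rw [hxsum0 j hex]
    · fin_cases x
      · show assets (spNet Sets M l) r₀ (uBank k m)
            ≤ assets (spPost Sets M l β ρ) r' (uBank k m)
        rw [as_pre_u, as_post_u]
      · show assets (spNet Sets M l) r₀ (wBank k m)
            ≤ assets (spPost Sets M l β ρ) r' (wBank k m)
        rw [pre_w, post_w]
  · -- total increase
    rw [Finset.sum_congr rfl (fun i _ => by
      rw [as_s, as_pre_s, hu0 i, zero_mul, sub_zero] :
      ∀ i ∈ Finset.univ, assets (spPost Sets M l β ρ) r' (sBank i)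
        - assets (spNet Sets M l) r₀ (sBank i) = if i ∈ P then M else 0)]
    rw [Finset.sum_ite_mem, Finset.univ_inter, Finset.sum_const, hP,
      nsmul_eq_mul]
  · -- solvency
    intro i hi
    rw [tl_post_s, as_s, if_pos hi]
  · -- element payments
    intro j hj
    have : ∀ i : Fin k, (spPost Sets M l β ρ).liab (sBank i) (xBank j)
        = if j ∈ Sets i then (1:ℝ) else 0 := fun i => rfl
    simp_rw [this]
    exact hxsum j hj
  · rw [pre_w, post_w]
end

section
/- In a financial network without default cost, if after a Pareto-positive multi-trade of outgoing edges of debtor u with excess returns the post-trade recovery rate satisfies r'_u = 1, then the pre-trade recovery rate also satisfied r_u = 1, i.e., u was already solvent before the trade. -/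
open Finset

variable {V : Type} [Fintype V] [DecidableEq V]

/-- The network after a multi-trade of the outgoing edges of `u` (other than `(u,w)`) to
buyer `w` with fractions `β b` and returns `ρ b` to the creditors `b ∉ {u,w}`. -/
noncomputable def postOut {n : ℕ} (N : Network (Fin n)) (u w : Fin n)
    (β ρ : Fin n → ℝ) : Network (Fin n) where
  liab a b :=
    if a = u ∧ b = w then N.liab u w + ∑ c, β c * N.liab u c
    else if a = u then (1 - β b) * N.liab u b
    else N.liab a b
  ext b := if b = w then N.ext w - ∑ c, ρ c else N.ext b + ρ b

/-- Without default cost: if after a Pareto-positive multi-trade of outgoing edges of `u`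
with excess returns the post-trade recovery rate of `u` is 1, then `u` was already
solvent before the trade, i.e. its pre-trade recovery rate was 1. -/
theorem stmt_18 {n : ℕ} (N : Network (Fin n)) (u w : Fin n) (huw : u ≠ w)
    (hliab : ∀ a b, 0 ≤ N.liab a b) (hext : ∀ b, 0 ≤ N.ext b)
    (β ρ : Fin n → ℝ)
    (hβ : ∀ b, β b ∈ Set.Icc (0:ℝ) 1) (hβu : β u = 0) (hβw : β w = 0)
    (hρu : ρ u = 0) (hρw : ρ w = 0)
    (r r' : Fin n → ℝ)
    (hr : IsClearing N r) (hr' : IsClearing (postOut N u w β ρ) r')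
    (hexcess : ∀ b, r' u * (β b * N.liab u b) ≤ ρ b ∧ ρ b ≤ β b * N.liab u b)
    (hbudget : ∑ b, ρ b ≤ N.ext w)
    (hpareto : ∀ b, assets N r b ≤ assets (postOut N u w β ρ) r' b)
    (hstrict : ∃ b, b ≠ u ∧ b ≠ w ∧ 0 < N.liab u b ∧
        assets N r b < assets (postOut N u w β ρ) r' b) :
    r' u = 1 → r u = 1 := by
  intro h1
  have hρ : ∀ b, ρ b = β b * N.liab u b := by
    intro b
    have h := hexcess b
    rw [h1, one_mul] at h
    exact le_antisymm h.2 h.1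
  have hS : ∑ c, ρ c = ∑ c, β c * N.liab u c :=
    Finset.sum_congr rfl fun c _ => hρ c
  set S := ∑ c, β c * N.liab u c with hSdef
  have hTL : ∀ v, totalLiab (postOut N u w β ρ) v = totalLiab N v := by
    intro v
    by_cases hv : v = u
    · subst hv
      simp only [totalLiab, postOut, true_and, if_pos rfl, eq_self_iff_true, if_true]
      rw [← hSdef]
      have hsum : ∑ b, (if b = w then N.liab v w + S else (1 - β b) * N.liab v b)
          = ∑ b, ((1 - β b) * N.liab v b + if b = w then S else 0) := by
        refine Finset.sum_congr rfl fun b _ => ?_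
        by_cases hb : b = w
        · subst hb; simp [hβw]
        · simp [hb]
      rw [hsum, Finset.sum_add_distrib, Finset.sum_ite_eq' Finset.univ w]
      simp only [Finset.mem_univ, if_true, hSdef]
      rw [Finset.sum_congr rfl (fun b _ => by ring :
        ∀ b ∈ Finset.univ, (1 - β b) * N.liab v b = N.liab v b - β b * N.liab v b),
        Finset.sum_sub_distrib]
      ring
    · simp only [totalLiab, postOut]
      refine Finset.sum_congr rfl fun b _ => ?_
      simp [hv]
  have hA : ∀ v, assets (postOut N u w β ρ) r' v = assets N r' v := by
    intro v
    simp only [assets, postOut]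
    have hsum : ∑ a, r' a * (if a = u ∧ v = w then N.liab u w + S
          else if a = u then (1 - β v) * N.liab u v else N.liab a v)
        = ∑ a, (r' a * N.liab a v + if a = u then
            r' u * ((if v = w then N.liab u w + S else (1 - β v) * N.liab u v)
              - N.liab u v) else 0) := by
      refine Finset.sum_congr rfl fun a _ => ?_
      by_cases ha : a = u
      · subst ha
        by_cases hv : v = w <;> simp [hv] <;> ring
      · simp [ha]
    rw [hsum, Finset.sum_add_distrib, Finset.sum_ite_eq' Finset.univ u]
    simp only [Finset.mem_univ, if_true, h1, one_mul]
    by_cases hv : v = w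
    · subst hv
      simp only [if_pos rfl, hS, eq_self_iff_true, if_true]
      ring
    · simp only [if_neg hv]
      rw [hρ v]
      ring
  have hfix : updateMap N r' = r' := by
    funext v
    have h2 := congrFun hr'.2.1 v
    simp only [updateMap] at h2 ⊢
    rw [hTL v, hA v] at h2
    exact h2
  have hle := hr.2.2 r' hr'.1 hfix
  have h3 := (hr.1 u).2
  have h4 := hle u
  linarith
end

section
/- A single donation from w to v, modeled as a claims trade of an auxiliary edge (z, v) of infinite (or sufficiently large) liability from an auxiliary bank z with no incoming edges and no external assets, yields post-trade clearing assets a'_b for every original bank b that coincide with those obtained by directly transferring rho external assets from w to v; in particular the payment on the auxiliary edge is 0 before and after the trade, and the return rho is constrained only by a_w^x. -/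
open Finset

variable {V : Type} [Fintype V] [DecidableEq V]

/-- The network extended with an auxiliary source bank `z` (no incoming edges, no external
assets) and the auxiliary claim `(z,v)` of liability `Λ`, after the claims trade of a
`β`-fraction of `(z,v)` to `w` with return `ρ` (so `(z,v)` keeps liability `(1−β)·Λ`,
`(z,w)` gets liability `β·Λ`, and `ρ` external assets move from `w` to `v`). -/
noncomputable def auxNet {n : ℕ} (N : Network (Fin n)) (v w : Fin n) (Λ β ρ : ℝ) :
    Network (Fin n ⊕ Unit) where
  liab a b :=
    match a, b with
    | Sum.inl a, Sum.inl b => N.liab a b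
    | Sum.inr _, Sum.inl b => if b = v then (1 - β) * Λ else if b = w then β * Λ else 0
    | _, Sum.inr _ => 0
  ext b :=
    match b with
    | Sum.inl b => if b = v then N.ext v + ρ else if b = w then N.ext w - ρ else N.ext b
    | Sum.inr _ => 0

/-- The network after a direct donation of `ρ` from `w` to `v` (no edge changes). -/
noncomputable def donateNet {n : ℕ} (N : Network (Fin n)) (v w : Fin n) (ρ : ℝ) :
    Network (Fin n) :=
  ⟨N.liab, fun b => if b = v then N.ext v + ρ else if b = w then N.ext w - ρ else N.ext b⟩

section Helper

variable {n : ℕ}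

/-- Generic transfer lemma: an augmented network `A` on `Fin n ⊕ Unit` that agrees with
`M` on `Fin n`, whose extra vertex has no incoming edges and no external assets but
positive total liabilities, has the same clearing assets on `Fin n` as `M`, and the
extra vertex's recovery rate is `0`. -/
lemma transfer (A : Network (Fin n ⊕ Unit)) (M : Network (Fin n))
    (hle : ∀ a b, A.liab (Sum.inl a) (Sum.inl b) = M.liab a b)
    (hzin : ∀ a u, A.liab a (Sum.inr u) = 0)
    (hext : ∀ b, A.ext (Sum.inl b) = M.ext b)
    (hzext : ∀ u, A.ext (Sum.inr u) = 0)
    (hΛtot : 0 < totalLiab A (Sum.inr ()))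
    (r₁ : Fin n ⊕ Unit → ℝ) (r₂ : Fin n → ℝ)
    (h₁ : IsClearing A r₁) (h₂ : IsClearing M r₂) :
    (∀ b, assets A r₁ (Sum.inl b) = assets M r₂ b) ∧ r₁ (Sum.inr ()) = 0 := by
  -- assets of the auxiliary vertex are always 0
  have hassz : ∀ r : Fin n ⊕ Unit → ℝ, assets A r (Sum.inr ()) = 0 := by
    intro r
    simp [assets, hzext, hzin]
  -- any fixed point has 0 at the auxiliary vertex
  have hfixz : ∀ r : Fin n ⊕ Unit → ℝ, updateMap A r = r → r (Sum.inr ()) = 0 := by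
    intro r hr
    have := congrFun hr (Sum.inr ())
    rw [updateMap, hassz r] at this
    rw [if_neg (by linarith)] at this
    simpa using this.symm
  -- total liabilities agree on `Fin n`
  have htot : ∀ b, totalLiab A (Sum.inl b) = totalLiab M b := by
    intro b
    simp [totalLiab, Fintype.sum_sum_type, hle, hzin]
  -- assets formula on `Fin n` for any `r` with `r (inr ()) = 0`
  have hass : ∀ r : Fin n ⊕ Unit → ℝ, r (Sum.inr ()) = 0 →
      ∀ b, assets A r (Sum.inl b) = assets M (fun a => r (Sum.inl a)) b := by
    intro r hz b
    simp [assets, Fintype.sum_sum_type, hle, hext, hz]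
  have hupd : ∀ r : Fin n ⊕ Unit → ℝ, r (Sum.inr ()) = 0 →
      ∀ b, updateMap A r (Sum.inl b) = updateMap M (fun a => r (Sum.inl a)) b := by
    intro r hz b
    rw [updateMap, updateMap, hass r hz b, htot b]
  obtain ⟨hbox₁, hfix₁, hmax₁⟩ := h₁
  obtain ⟨hbox₂, hfix₂, hmax₂⟩ := h₂
  have hz₁ : r₁ (Sum.inr ()) = 0 := hfixz r₁ hfix₁
  -- r₁ restricted is a fixed point of M
  have hr₁fix : updateMap M (fun a => r₁ (Sum.inl a)) = fun a => r₁ (Sum.inl a) := by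
    funext b
    rw [← hupd r₁ hz₁ b]
    exact congrFun hfix₁ (Sum.inl b)
  have hle₁ : (fun a => r₁ (Sum.inl a)) ≤ r₂ :=
    hmax₂ _ (fun b => hbox₁ (Sum.inl b)) hr₁fix
  -- r₂ extended by 0 is a fixed point of A
  set r'' : Fin n ⊕ Unit → ℝ := Sum.elim r₂ (fun _ => 0) with hr''
  have hz'' : r'' (Sum.inr ()) = 0 := rfl
  have hbox'' : inBox r'' := by
    intro u
    cases u with
    | inl a => exact hbox₂ a
    | inr u => exact ⟨le_refl 0, zero_le_one⟩
  have hfix'' : updateMap A r'' = r'' := by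
    funext u
    cases u with
    | inl b =>
      rw [hupd r'' hz'' b]
      exact congrFun hfix₂ b
    | inr u =>
      cases u
      rw [updateMap, hassz r'']
      rw [if_neg (by linarith)]
      simp [hr'']
  have hle₂ : r'' ≤ r₁ := hmax₁ r'' hbox'' hfix''
  have heq : ∀ b, r₁ (Sum.inl b) = r₂ b := by
    intro b
    exact le_antisymm (hle₁ b) (hle₂ (Sum.inl b))
  refine ⟨fun b => ?_, hz₁⟩
  rw [hass r₁ hz₁ b]
  congr 1
  funext a
  exact heq a

end Helper

/-- A single donation, modeled as a claims trade of an auxiliary edge `(z,v)` of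
sufficiently large liability `Λ` from an auxiliary bank `z` with no incoming edges and no
external assets, yields for every original bank the same clearing assets as the direct
transfer of `ρ` external assets from `w` to `v`; the payment on the auxiliary edge is 0
before and after the trade, and the return is constrained only by `a_w^x`. -/
theorem stmt_19 {n : ℕ} (N : Network (Fin n)) (v w : Fin n) (hvw : v ≠ w)
    (hliab : ∀ a b, 0 ≤ N.liab a b) (hext : ∀ b, 0 ≤ N.ext b)
    (Λ β ρ : ℝ) (hΛ : 0 < Λ) (hβ : β ∈ Set.Icc (0:ℝ) 1)
    (hρ0 : 0 ≤ ρ) (hρw : ρ ≤ N.ext w) (hbig : N.ext w ≤ β * Λ) :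
    (∀ r₀ : Fin n ⊕ Unit → ℝ, ∀ rN : Fin n → ℝ,
      IsClearing (auxNet N v w Λ 0 0) r₀ → IsClearing N rN →
        (∀ b : Fin n, assets (auxNet N v w Λ 0 0) r₀ (Sum.inl b) = assets N rN b) ∧
        r₀ (Sum.inr ()) = 0 ∧ r₀ (Sum.inr ()) * Λ = 0) ∧
    (∀ r₁ : Fin n ⊕ Unit → ℝ, ∀ r₂ : Fin n → ℝ,
      IsClearing (auxNet N v w Λ β ρ) r₁ → IsClearing (donateNet N v w ρ) r₂ →
        (∀ b : Fin n, assets (auxNet N v w Λ β ρ) r₁ (Sum.inl b)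
            = assets (donateNet N v w ρ) r₂ b) ∧
        r₁ (Sum.inr ()) = 0 ∧
        r₁ (Sum.inr ()) * ((1 - β) * Λ) = 0 ∧ r₁ (Sum.inr ()) * (β * Λ) = 0) := by
  have htotz : ∀ β' ρ' : ℝ, totalLiab (auxNet N v w Λ β' ρ') (Sum.inr ()) = Λ := by
    intro β' ρ'
    have : ∀ b : Fin n,
        (if b = v then (1 - β') * Λ else if b = w then β' * Λ else 0)
          = (if b = v then (1 - β') * Λ else 0) + (if b = w then β' * Λ else 0) := by
      intro b
      by_cases h1 : b = v
      · subst h1; simp [hvw]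
      · simp [h1]
    simp only [totalLiab, auxNet, Fintype.sum_sum_type]
    rw [Finset.sum_congr rfl (fun b _ => this b)]
    rw [Finset.sum_add_distrib]
    simp [Finset.sum_ite_eq']
    ring
  constructor
  · intro r₀ rN h₀ hN
    have hext0 : ∀ b : Fin n, (auxNet N v w Λ 0 0).ext (Sum.inl b) = N.ext b := by
      intro b
      show (if b = v then N.ext v + 0 else if b = w then N.ext w - 0 else N.ext b) = N.ext b
      by_cases h1 : b = v
      · subst h1; simp
      · by_cases h2 : b = w
        · subst h2; simp [h1]
        · simp [h1, h2]
    have := transfer (auxNet N v w Λ 0 0) N (fun a b => rfl) (fun a u => by cases a <;> rfl)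
      hext0 (fun u => rfl) (by rw [htotz]; exact hΛ) r₀ rN h₀ hN
    exact ⟨this.1, this.2, by rw [this.2]; ring⟩
  · intro r₁ r₂ h₁ h₂
    have hext1 : ∀ b : Fin n,
        (auxNet N v w Λ β ρ).ext (Sum.inl b) = (donateNet N v w ρ).ext b := fun b => rfl
    have := transfer (auxNet N v w Λ β ρ) (donateNet N v w ρ) (fun a b => rfl)
      (fun a u => by cases a <;> rfl) hext1 (fun u => rfl)
      (by rw [htotz]; exact hΛ) r₁ r₂ h₁ h₂
    exact ⟨this.1, this.2, by rw [this.2]; ring, by rw [this.2]; ring⟩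
end
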